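/- arXiv:2001.09013 — 2 statements merged into one kernel-verified Lean document; each statement's English description precedes it below -/
import Mathlib

section
/- Under the hypotheses of the convergence theorem for the adaptive gradient method with a (δ, L, μ, m, V)-model, assume in addition that there is L > 0 with μ ≤ 2L and L_k ≤ 2L for all k = 1, …, N. Then, with q := (2L − μ)/(2L + m) and y_N := x_{j(N)} where j(N) minimizes f_δ(x_k) over k = 1, …, N, one has f(y_N) − f(x⋆) ≤ min{(2L + m)/N, (2L + m)·q^N}·V[x₀](x⋆) + δ̃ + 3δ. -/
open RealInnerProductSpace Finset Filter Topology

/-- The Bregman divergence `V[y](x) = d(x) - d(y) - ⟪∇d(y), x - y⟫` generated by `d`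
with gradient map `Dd`. -/
noncomputable def breg {E : Type*} [NormedAddCommGroup E] [InnerProductSpace ℝ E]
    (d : E → ℝ) (Dd : E → E) (y x : E) : ℝ :=
  d x - d y - ⟪Dd y, x - y⟫

/-- `g` is a subgradient of `ψ` at `z` (relative to the set `Q`). -/
def IsSubgradOn {E : Type*} [NormedAddCommGroup E] [InnerProductSpace ℝ E]
    (Q : Set E) (ψ : E → ℝ) (z g : E) : Prop :=
  ∀ x ∈ Q, ψ z + ⟪g, x - z⟫ ≤ ψ x

/-- `ψ` is `m`-strongly convex relative to `d` on `Q`, where `V` is the Bregman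
divergence generated by `d`. -/
def StrongRelConvexOn {E : Type*} [NormedAddCommGroup E] [InnerProductSpace ℝ E]
    (Q : Set E) (V : E → E → ℝ) (m : ℝ) (ψ : E → ℝ) : Prop :=
  ∀ z ∈ Q, ∀ g : E, IsSubgradOn Q ψ z g → ∀ x ∈ Q, ψ z + ⟪g, x - z⟫ + m * V z x ≤ ψ x

/-- `y` is a `δ`-approximate minimizer of `Ψ` on `Q`: there exists a subgradient `h`
of `Ψ` at `y` such that `⟪h, x - y⟫ ≥ -δ` for all `x ∈ Q`. -/
def IsApproxMinOn {E : Type*} [NormedAddCommGroup E] [InnerProductSpace ℝ E]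
    (Q : Set E) (Ψ : E → ℝ) (δ : ℝ) (y : E) : Prop :=
  y ∈ Q ∧ ∃ h : E, IsSubgradOn Q Ψ y h ∧ ∀ x ∈ Q, -δ ≤ ⟪h, x - y⟫

/-!
Writing `R k = V[x_k](x⋆)`, one step of the method is a Bregman proximal step, and the
three-point identity turns its optimality condition into the descent inequality
`f_δ(x_{k+1}) - f(x⋆) - δ̃ - δ ≤ (L_{k+1} - μ) R k - (L_{k+1} + m) R (k+1)`,
whose right-hand side is at most `(L_{k+1} + m) (q R k - R (k+1))` since `L_{k+1} ≤ 2L`.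
The left-hand side is at least `F = f_δ(y_N) - f(x⋆) - δ̃ - δ`. If `F > 0`, every gap
`q R k - R (k+1)` is positive, so `R` decays geometrically, which gives the rate `q^N`,
and telescoping the gaps (using `q ≤ 1`) gives the rate `1/N`.
-/

section Bregman

variable {E : Type*} [NormedAddCommGroup E] [InnerProductSpace ℝ E]

lemma ConvexOn.apply_add_smul_sub_le {Q : Set E} {ψ : E → ℝ} (hψ : ConvexOn ℝ Q ψ) {z u : E}
    (hz : z ∈ Q) (hu : u ∈ Q) {t : ℝ} (ht : t ∈ Set.Icc (0 : ℝ) 1) :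
    ψ (z + t • (u - z)) ≤ ψ z + t * (ψ u - ψ z) := by
  have h := hψ.2 hz hu (sub_nonneg.2 ht.2) ht.1 (sub_add_cancel 1 t)
  rw [show (1 - t) • z + t • u = z + t • (u - z) by module, smul_eq_mul, smul_eq_mul] at h
  linarith

lemma breg_three_point (d : E → ℝ) (Dd : E → E) (y z u : E) :
    breg d Dd y u = breg d Dd y z + ⟪Dd z - Dd y, u - z⟫ + breg d Dd z u := by
  simp only [breg, inner_sub_left, inner_sub_right]
  ring

variable [CompleteSpace E] {d : E → ℝ} {Dd : E → E}

lemma tendsto_inv_mul_breg_add_smul (hd : ∀ x, HasGradientAt d (Dd x) x) (z v : E) :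
    Tendsto (fun t : ℝ => t⁻¹ * breg d Dd z (z + t • v)) (𝓝[>] 0) (𝓝 0) := by
  have h := (((hd z).hasFDerivAt.hasLineDerivAt v).tendsto_slope_zero_right).sub_const
    ⟪Dd z, v⟫
  rw [InnerProductSpace.toDual_apply_apply, sub_self] at h
  refine h.congr' ?_
  filter_upwards [self_mem_nhdsWithin] with t (ht : 0 < t)
  simp only [breg, add_sub_cancel_left, real_inner_smul_right, smul_eq_mul]
  field_simp

/-- The error term disappears because `V[z](z + t • (u - z)) = o(t)` as `t → 0⁺`. -/
lemma IsSubgradOn.of_sub_mul_breg_le {Q : Set E} (hQ : Convex ℝ Q)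
    (hd : ∀ x, HasGradientAt d (Dd x) x) {ψ : E → ℝ} (hψ : ConvexOn ℝ Q ψ) {z g : E}
    (hz : z ∈ Q) (c : ℝ) (h : ∀ u ∈ Q, ψ z + ⟪g, u - z⟫ - c * breg d Dd z u ≤ ψ u) :
    IsSubgradOn Q ψ z g := by
  intro u hu
  have hlim := (tendsto_inv_mul_breg_add_smul hd z (u - z)).const_mul c
  rw [mul_zero] at hlim
  suffices ψ z + ⟪g, u - z⟫ - ψ u ≤ 0 by linarith
  refine ge_of_tendsto hlim ?_
  filter_upwards [Ioc_mem_nhdsGT one_pos] with t ⟨ht0, ht1⟩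
  have hw := h _ (hQ.add_smul_sub_mem hz hu ⟨ht0.le, ht1⟩)
  have hcvx := hψ.apply_add_smul_sub_le hz hu ⟨ht0.le, ht1⟩
  rw [add_sub_cancel_left, real_inner_smul_right] at hw
  rw [mul_left_comm, le_inv_mul_iff₀ ht0]
  linarith

lemma isSubgradOn_univ_of_hasGradientAt (hconv : ConvexOn ℝ Set.univ d)
    (hd : ∀ x, HasGradientAt d (Dd x) x) (z : E) : IsSubgradOn Set.univ d z (Dd z) :=
  -- the definition of `breg` is this error bound, with equality, for `c = -1`
  .of_sub_mul_breg_le convex_univ hd hconv (Set.mem_univ z) (-1) fun u _ => by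
    unfold breg
    linarith

lemma breg_nonneg (hconv : ConvexOn ℝ Set.univ d) (hd : ∀ x, HasGradientAt d (Dd x) x)
    (z u : E) : 0 ≤ breg d Dd z u := by
  have := isSubgradOn_univ_of_hasGradientAt hconv hd z u (Set.mem_univ u)
  unfold breg
  linarith

lemma IsApproxMinOn.add_mul_breg_le {Q : Set E} (hQ : Convex ℝ Q)
    (hd : ∀ x, HasGradientAt d (Dd x) x) {ψ : E → ℝ} {m L δ : ℝ} (hψ : ConvexOn ℝ Q ψ)
    (hψm : StrongRelConvexOn Q (breg d Dd) m ψ) {y z u : E}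
    (hz : IsApproxMinOn Q (fun v => ψ v + L * breg d Dd y v) δ z) (hu : u ∈ Q) :
    ψ z + L * breg d Dd y z + (L + m) * breg d Dd z u ≤ ψ u + L * breg d Dd y u + δ := by
  obtain ⟨hzQ, h, hsub, happrox⟩ := hz
  have hinner : ∀ v, ⟪h - L • (Dd z - Dd y), v - z⟫
      = ⟪h, v - z⟫ - L * ⟪Dd z - Dd y, v - z⟫ := fun v => by
    rw [inner_sub_left, real_inner_smul_left]
  have hg : IsSubgradOn Q ψ z (h - L • (Dd z - Dd y)) :=
    .of_sub_mul_breg_le hQ hd hψ hzQ L fun v hv => by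
      rw [hinner]
      linear_combination hsub v hv + L * breg_three_point d Dd y z v
  have hstrong := hψm z hzQ _ hg u hu
  rw [hinner] at hstrong
  linear_combination hstrong + happrox u hu - L * breg_three_point d Dd y z u

end Bregman

lemma sub_le_div_mul_add {L M μ m : ℝ} (hLM : L ≤ M) (hμm : 0 ≤ μ + m) (hM : 0 < M + m) :
    L - μ ≤ (M - μ) / (M + m) * (L + m) := by
  rw [div_mul_eq_mul_div, le_div_iff₀ hM]
  nlinarith [mul_nonneg (sub_nonneg.2 hLM) hμm]

lemma nat_mul_le_of_le_mul_sub_succ {F C : ℝ} {R : ℕ → ℝ} {N : ℕ} (hC : 0 ≤ C)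
    (hRN : 0 ≤ R N) (hF : ∀ k < N, F ≤ C * (R k - R (k + 1))) : N * F ≤ C * R 0 := by
  calc (N : ℝ) * F = ∑ _k ∈ range N, F := by simp
    _ ≤ ∑ k ∈ range N, C * (R k - R (k + 1)) := sum_le_sum fun k hk => hF k (mem_range.1 hk)
    _ = C * (R 0 - R N) := by rw [← mul_sum, sum_range_sub']
    _ ≤ C * R 0 := by nlinarith

lemma le_min_div_mul_pow_mul {F q C : ℝ} {R c : ℕ → ℝ} {N : ℕ} (hN : 0 < N) (hq0 : 0 ≤ q)
    (hq1 : q ≤ 1) (hC : 0 ≤ C) (hR : ∀ k, 0 ≤ R k) (hc : ∀ k < N, 0 < c k ∧ c k ≤ C)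
    (hF : ∀ k < N, F ≤ c k * (q * R k - R (k + 1))) :
    F ≤ min (C / N) (C * q ^ N) * R 0 := by
  rcases le_or_gt F 0 with hF0 | hF0
  · exact hF0.trans (mul_nonneg (le_min (by positivity) (by positivity)) (hR 0))
  have hgap : ∀ k < N, R (k + 1) ≤ q * R k := fun k hk => by
    nlinarith [hF k hk, hc k hk]
  have hFC : ∀ k < N, F ≤ C * (q * R k - R (k + 1)) := fun k hk =>
    (hF k hk).trans (mul_le_mul_of_nonneg_right (hc k hk).2 (by linarith [hgap k hk]))
  rw [min_mul_of_nonneg _ _ (hR 0)]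
  refine le_min ?_ ?_
  · have := nat_mul_le_of_le_mul_sub_succ hC (hR N) fun k hk =>
      (hFC k hk).trans (mul_le_mul_of_nonneg_left (by nlinarith [hR k]) hC)
    rw [div_mul_eq_mul_div, le_div_iff₀ (by exact_mod_cast hN)]
    linarith
  · obtain ⟨M, rfl⟩ : ∃ M, N = M + 1 := ⟨N - 1, by omega⟩
    have hgeom := le_geom hq0 M fun k hk => hgap k (by omega)
    calc F ≤ C * (q * R M - R (M + 1)) := hFC M (by omega)
      _ ≤ C * (q * (q ^ M * R 0)) := by
        gcongr
        linarith [hR (M + 1), mul_le_mul_of_nonneg_left hgeom hq0]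
      _ = C * q ^ (M + 1) * R 0 := by ring

theorem stmt5_general
    {E : Type*} [NormedAddCommGroup E] [InnerProductSpace ℝ E] [FiniteDimensional ℝ E]
    (Q : Set E) (hQ : Convex ℝ Q)
    (d : E → ℝ) (Dd : E → E)
    (hd_conv : ConvexOn ℝ Set.univ d) (hd_diff : ∀ x, HasGradientAt d (Dd x) x)
    (f : E → ℝ) (μ m δ δt : ℝ)
    (hμ : 0 ≤ μ) (hm : 0 ≤ m) (hδ : 0 ≤ δ)
    (N : ℕ) (hN : 1 ≤ N)
    (x : ℕ → E)
    (L : ℕ → ℝ) (hL : ∀ k, 1 ≤ k → k ≤ N → 0 < L k)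
    (Lb : ℝ) (hLb : 0 < Lb) (hμLb : μ ≤ 2 * Lb)
    (hLle : ∀ k, 1 ≤ k → k ≤ N → L k ≤ 2 * Lb)
    (fδ : ℕ → ℝ) (ψ : ℕ → E → ℝ)
    (hψ_conv : ∀ k < N, ConvexOn ℝ Q (ψ k))
    (hψ_strong : ∀ k < N, StrongRelConvexOn Q (breg d Dd) m (ψ k))
    (ha : ∀ k < N, ∀ u ∈ Q, μ * breg d Dd (x k) u ≤ f u - fδ k - ψ k u)
    (hb : ∀ k ≤ N, f (x k) - δ ≤ fδ k ∧ fδ k ≤ f (x k))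
    (hc : ∀ k < N,
      IsApproxMinOn Q (fun u => ψ k u + L (k + 1) * breg d Dd (x k) u) δt (x (k + 1)))
    (hd_ls : ∀ k < N,
      fδ (k + 1) ≤ fδ k + ψ k (x (k + 1)) + L (k + 1) * breg d Dd (x k) (x (k + 1)) + δ)
    (xs : E) (hxs : xs ∈ Q)
    (jN : ℕ) (hjN : jN ∈ Finset.Icc 1 N)
    (hjmin : ∀ k ∈ Finset.Icc 1 N, fδ jN ≤ fδ k) :
    f (x jN) - f xs ≤
      min ((2 * Lb + m) / N) ((2 * Lb + m) * ((2 * Lb - μ) / (2 * Lb + m)) ^ N)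
          * breg d Dd (x 0) xs
        + δt + 3 * δ := by
  set q := (2 * Lb - μ) / (2 * Lb + m)
  have hden : 0 < 2 * Lb + m := by linarith
  have hR : ∀ k, 0 ≤ breg d Dd (x k) xs := fun k => breg_nonneg hd_conv hd_diff _ _
  have hstep : ∀ k < N, fδ jN - f xs - δt - δ ≤
      (L (k + 1) + m) * (q * breg d Dd (x k) xs - breg d Dd (x (k + 1)) xs) := by
    intro k hk
    have hprox := (hc k hk).add_mul_breg_le hQ hd_diff (hψ_conv k hk) (hψ_strong k hk) hxs
    have hcoef := mul_le_mul_of_nonneg_right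
      (sub_le_div_mul_add (hLle (k + 1) (by omega) (by omega)) (add_nonneg hμ hm) hden) (hR k)
    have hj := hjmin (k + 1) (Finset.mem_Icc.2 ⟨by omega, by omega⟩)
    linarith [ha k hk xs hxs, hd_ls k hk]
  have hrate := le_min_div_mul_pow_mul (R := fun k => breg d Dd (x k) xs) hN
    (div_nonneg (by linarith) hden.le) ((div_le_one hden).2 (by linarith)) hden.le hR
    (fun k hk => ⟨by linarith [hL (k + 1) (by omega) (by omega)],
      by linarith [hLle (k + 1) (by omega) (by omega)]⟩) hstep
  linarith [(hb jN (Finset.mem_Icc.1 hjN).2).1]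

/-- Remark 3.3: convergence rate of the adaptive gradient method with a
`(δ, L, μ, m, V)`-model when all the adaptive constants satisfy `L_k ≤ 2L`. -/
theorem stmt5
    {E : Type*} [NormedAddCommGroup E] [InnerProductSpace ℝ E] [FiniteDimensional ℝ E]
    (Q : Set E) (hQ : Convex ℝ Q)
    (d : E → ℝ) (Dd : E → E)
    (hd_conv : ConvexOn ℝ Set.univ d) (hd_diff : ∀ x, HasGradientAt d (Dd x) x)
    (f : E → ℝ) (μ m δ δt : ℝ)
    (hμ : 0 ≤ μ) (hm : 0 ≤ m) (hδ : 0 ≤ δ) (hδt : 0 ≤ δt)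
    (N : ℕ) (hN : 1 ≤ N)
    (x : ℕ → E) (hxQ : ∀ k ≤ N, x k ∈ Q)
    (L : ℕ → ℝ) (hL : ∀ k, 1 ≤ k → k ≤ N → 0 < L k)
    (Lb : ℝ) (hLb : 0 < Lb) (hμLb : μ ≤ 2 * Lb)
    (hLle : ∀ k, 1 ≤ k → k ≤ N → L k ≤ 2 * Lb)
    (fδ : ℕ → ℝ) (ψ : ℕ → E → ℝ)
    (hψ_conv : ∀ k < N, ConvexOn ℝ Q (ψ k))
    (hψ0 : ∀ k < N, ψ k (x k) = 0)
    (hψ_strong : ∀ k < N, StrongRelConvexOn Q (breg d Dd) m (ψ k))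
    (ha : ∀ k < N, ∀ u ∈ Q, μ * breg d Dd (x k) u ≤ f u - fδ k - ψ k u)
    (hb : ∀ k ≤ N, f (x k) - δ ≤ fδ k ∧ fδ k ≤ f (x k))
    (hc : ∀ k < N,
      IsApproxMinOn Q (fun u => ψ k u + L (k + 1) * breg d Dd (x k) u) δt (x (k + 1)))
    (hd_ls : ∀ k < N,
      fδ (k + 1) ≤ fδ k + ψ k (x (k + 1)) + L (k + 1) * breg d Dd (x k) (x (k + 1)) + δ)
    (xs : E) (hxs : xs ∈ Q) (hmin : ∀ u ∈ Q, f xs ≤ f u)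
    (jN : ℕ) (hjN : jN ∈ Finset.Icc 1 N)
    (hjmin : ∀ k ∈ Finset.Icc 1 N, fδ jN ≤ fδ k) :
    f (x jN) - f xs ≤
      min ((2 * Lb + m) / N) ((2 * Lb + m) * ((2 * Lb - μ) / (2 * Lb + m)) ^ N)
          * breg d Dd (x 0) xs
        + δt + 3 * δ :=
  stmt5_general Q hQ d Dd hd_conv hd_diff f μ m δ δt hμ hm hδ N hN x L hL Lb hLb hμLb hLle fδ ψ
    hψ_conv hψ_strong ha hb hc hd_ls xs hxs jN hjN hjmin
end

section
/- Fix k ≥ 0 and let μ, m, δ_k, δ̃_k ≥ 0, A_k ≥ 0, α_{k+1} > 0, L_{k+1} > 0 with A_{k+1} := A_k + α_{k+1} satisfying A_{k+1}·(1 + A_k·μ + A_k·m) = L_{k+1}·α_{k+1}². Let x_k, u_k ∈ Q, y_{k+1} := (α_{k+1}·u_k + A_k·x_k)/A_{k+1}, let ψ : E → ℝ be convex with ψ(y_{k+1}) = 0 and m-strongly convex relative to d, and let c ∈ ℝ be such that: (a) μ·V[y_{k+1}](x) ≤ f(x) − c − ψ(x) for all x ∈ Q; (b) u_{k+1} ∈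 Q is a δ̃_k-approximate minimizer of x ↦ α_{k+1}·ψ(x) + (1 + A_k·μ + A_k·m)·V[u_k](x) + α_{k+1}·μ·V[y_{k+1}](x) on Q; (c) x_{k+1} := (α_{k+1}·u_{k+1} + A_k·x_k)/A_{k+1}; (d) there is c⁺ ∈ ℝ with f(x_{k+1}) ≤ c⁺ + δ_k and c⁺ ≤ c + ψ(x_{k+1}) + (L_{k+1}/2)·‖x_{k+1} − y_{k+1}‖² + δ_k; and (e) d is 1-strongly convex with respect to the norm ‖·‖, i.e. V[y](x) ≥ (1/2)·‖x − y‖² for all x, y ∈ Q. Then for all x ∈ Q: A_{k+1}·f(x_{k+1}) − A_k·f(x_k) + (1 + A_{k+1}·μ + A_{k+1}·m)·V[u_{k+1}](x) − (1 + A_k·μ + A_k·m)·V[u_k](x) ≤ α_{k+1}·f(x) + 2·δ_k·A_{k+1} + δ̃_k. -/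
open RealInnerProductSpace Finset

/-!
The approximate optimality of `u_{k+1}`, after subtracting the gradient of the two Bregman
terms, yields a subgradient of `ψ` at `u_{k+1}`; relative strong convexity of `ψ` together with
the three-point identity for `V` then gives the prox inequality
`α ψ(u⁺) + B V[u](u⁺) + αμ V[y](u⁺) + (B + αμ + αm) V[u⁺](x) ≤ α ψ(x) + B V[u](x) + αμ V[y](x) + δ̃`
with `B = 1 + Aμ + Am`. Since `x⁺ - y = (α / A⁺)(u⁺ - u)`, the step-size equation
`A⁺ B = L α²` turns the quadratic term of the line-search test into `B · ½‖u⁺ - u‖² ≤ B V[u](u⁺)`,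
which the prox inequality absorbs. Convexity of `ψ` splits `A⁺ ψ(x⁺)` over `u⁺` and `x_k`, and the
lower model bound (a) at `x` and at `x_k` replaces `ψ` by `f - c`.
-/

open Filter Topology

section Gradient

variable {E : Type*} [NormedAddCommGroup E] [InnerProductSpace ℝ E] [CompleteSpace E]
  {f g : E → ℝ} {F G x : E}

theorem HasGradientAt.add (hf : HasGradientAt f F x) (hg : HasGradientAt g G x) :
    HasGradientAt (fun y => f y + g y) (F + G) x := by
  rw [hasGradientAt_iff_hasFDerivAt] at *
  rw [map_add]
  exact hf.add hg

theorem HasGradientAt.const_mul (c : ℝ) (hf : HasGradientAt f F x) :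
    HasGradientAt (fun y => c * f y) (c • F) x := by
  rw [hasGradientAt_iff_hasFDerivAt] at *
  simpa using hf.const_mul c

theorem HasGradientAt.hasDerivAt_lineMap (hg : HasGradientAt g G x) (y : E) :
    HasDerivAt (fun t : ℝ => g (x + t • (y - x))) ⟪G, y - x⟫ 0 := by
  have hline : HasDerivAt (fun t : ℝ => x + t • (y - x)) (y - x) 0 := by
    simpa using ((hasDerivAt_id (0 : ℝ)).smul_const (y - x)).const_add x
  exact (hasGradientAt_iff_hasFDerivAt.mp hg).comp_hasDerivAt_of_eq 0 hline (by simp)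

end Gradient

section Subgradient

variable {E : Type*} [NormedAddCommGroup E] [InnerProductSpace ℝ E] {Q : Set E}

theorem IsSubgradOn.sub_of_hasGradientAt [CompleteSpace E] (hQ : Convex ℝ Q) {φ g : E → ℝ}
    (hφ : ConvexOn ℝ Q φ) {u s G : E} (hu : u ∈ Q) (hg : HasGradientAt g G u)
    (hs : IsSubgradOn Q (fun x => φ x + g x) u s) : IsSubgradOn Q φ u (s - G) := by
  intro x hx
  have hslope : Tendsto (fun t : ℝ => t⁻¹ * (g (u + t • (x - u)) - g u)) (𝓝[>] 0)
      (𝓝 ⟪G, x - u⟫) := by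
    simpa using (hg.hasDerivAt_lineMap x).tendsto_slope_zero_right
  have hbound : ∀ᶠ t in 𝓝[>] (0 : ℝ),
      ⟪s, x - u⟫ - t⁻¹ * (g (u + t • (x - u)) - g u) ≤ φ x - φ u := by
    filter_upwards [Ioo_mem_nhdsGT one_pos] with t ⟨ht0, ht1⟩
    have hcombo : u + t • (x - u) = (1 - t) • u + t • x := by module
    have hsub := hs _ (hQ.add_smul_sub_mem hu hx ⟨ht0.le, ht1.le⟩)
    have hconv : φ (u + t • (x - u)) ≤ (1 - t) * φ u + t * φ x := by
      rw [hcombo]; exact hφ.2 hu hx (by linarith) ht0.le (by ring)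
    have hdiv : t * (t⁻¹ * (g (u + t • (x - u)) - g u)) = g (u + t • (x - u)) - g u := by
      field_simp
    rw [add_sub_cancel_left, real_inner_smul_right] at hsub
    refine le_of_mul_le_mul_left ?_ ht0
    rw [mul_sub, hdiv]
    linarith
  have hlim := le_of_tendsto (tendsto_const_nhds.sub hslope) hbound
  rw [inner_sub_left]
  linarith

theorem IsSubgradOn.of_const_mul {ψ : E → ℝ} {a : ℝ} (ha : 0 < a) {u s : E}
    (hs : IsSubgradOn Q (fun x => a * ψ x) u s) : IsSubgradOn Q ψ u (a⁻¹ • s) := by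
  intro x hx
  rw [real_inner_smul_left]
  refine le_of_mul_le_mul_left ?_ ha
  rw [mul_add, ← mul_assoc, mul_inv_cancel₀ ha.ne', one_mul]
  exact hs x hx

end Subgradient

section Bregman

variable {E : Type*} [NormedAddCommGroup E] [InnerProductSpace ℝ E] {d : E → ℝ} {Dd : E → E}

theorem breg_eq_breg_add_inner_add_breg (z u x : E) :
    breg d Dd z x = breg d Dd z u + ⟪Dd u - Dd z, x - u⟫ + breg d Dd u x := by
  simp only [breg, inner_sub_left, inner_sub_right]
  ring

theorem hasGradientAt_breg [CompleteSpace E] {x : E} (hd : HasGradientAt d (Dd x) x) (y : E) :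
    HasGradientAt (breg d Dd y) (Dd x - Dd y) x := by
  rw [hasGradientAt_iff_hasFDerivAt] at *
  have hinner : HasFDerivAt (fun z => ⟪Dd y, z - y⟫) (innerSL ℝ (Dd y)) x := by
    have hfun : (fun z => ⟪Dd y, z - y⟫) = fun z => innerSL ℝ (Dd y) z - ⟪Dd y, y⟫ := by
      ext z
      simp [inner_sub_right]
    rw [hfun]
    exact ((innerSL ℝ (Dd y)).hasFDerivAt).sub_const _
  rw [map_sub]
  exact (hd.sub_const (d y)).sub hinner

end Bregman

section Prox

variable {E : Type*} [NormedAddCommGroup E] [InnerProductSpace ℝ E] [CompleteSpace E]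
  {Q : Set E} {d : E → ℝ} {Dd : E → E} {ψ : E → ℝ} {m a b c δ : ℝ} {u y u' : E}

theorem IsApproxMinOn.three_point (hQ : Convex ℝ Q) (hd : ∀ x, HasGradientAt d (Dd x) x)
    (hψ : ConvexOn ℝ Q ψ) (hψm : StrongRelConvexOn Q (breg d Dd) m ψ) (ha : 0 < a)
    (hmin : IsApproxMinOn Q
      (fun x => a * ψ x + b * breg d Dd u x + c * breg d Dd y x) δ u') :
    ∀ x ∈ Q, a * ψ u' + b * breg d Dd u u' + c * breg d Dd y u'
        + (b + c + a * m) * breg d Dd u' x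
      ≤ a * ψ x + b * breg d Dd u x + c * breg d Dd y x + δ := by
  intro x hx
  obtain ⟨hu', s, hs, hδ⟩ := hmin
  set G := b • (Dd u' - Dd u) + c • (Dd u' - Dd y)
  have hG : HasGradientAt (fun x => b * breg d Dd u x + c * breg d Dd y x) G u' :=
    ((hasGradientAt_breg (hd u') u).const_mul b).add ((hasGradientAt_breg (hd u') y).const_mul c)
  have hs' : IsSubgradOn Q (fun x => a * ψ x + (b * breg d Dd u x + c * breg d Dd y x)) u' s := by
    simpa only [add_assoc] using hs
  have hsub : IsSubgradOn Q ψ u' (a⁻¹ • (s - G)) :=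
    (hs'.sub_of_hasGradientAt hQ (hψ.smul ha.le) hu' hG).of_const_mul ha
  have hstrong := hψm u' hu' _ hsub x hx
  rw [real_inner_smul_left] at hstrong
  have hscaled : a * ψ u' + ⟪s - G, x - u'⟫ + a * m * breg d Dd u' x ≤ a * ψ x := by
    have hmul := mul_le_mul_of_nonneg_left hstrong ha.le
    rwa [mul_add, mul_add, ← mul_assoc a a⁻¹, mul_inv_cancel₀ ha.ne', one_mul, ← mul_assoc]
      at hmul
  have hGx : ⟪G, x - u'⟫ = b * ⟪Dd u' - Dd u, x - u'⟫ + c * ⟪Dd u' - Dd y, x - u'⟫ := by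
    simp only [G, inner_add_left, real_inner_smul_left]
  rw [inner_sub_left, hGx] at hscaled
  rw [breg_eq_breg_add_inner_add_breg u u' x, breg_eq_breg_add_inner_add_breg y u' x]
  linarith [hδ x hx]

end Prox

section Combination

variable {E : Type*} [AddCommGroup E] [Module ℝ E] {s : Set E} {x y : E} {a b S : ℝ}

theorem Convex.inv_smul_add_mem (hs : Convex ℝ s) (hx : x ∈ s) (hy : y ∈ s) (ha : 0 ≤ a)
    (hb : 0 ≤ b) (hS : 0 < S) (habS : a + b = S) : S⁻¹ • (a • x + b • y) ∈ s := by
  rw [smul_add, smul_smul, smul_smul]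
  exact hs hx hy (by positivity) (by positivity) (by rw [← mul_add, habS, inv_mul_cancel₀ hS.ne'])

theorem ConvexOn.mul_map_inv_smul_add_le {f : E → ℝ} (hf : ConvexOn ℝ s f) (hx : x ∈ s)
    (hy : y ∈ s) (ha : 0 ≤ a) (hb : 0 ≤ b) (hS : 0 < S) (habS : a + b = S) :
    S * f (S⁻¹ • (a • x + b • y)) ≤ a * f x + b * f y := by
  have hle := hf.2 hx hy (by positivity : 0 ≤ S⁻¹ * a) (by positivity : 0 ≤ S⁻¹ * b)
    (by rw [← mul_add, habS, inv_mul_cancel₀ hS.ne'])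
  rw [← smul_smul, ← smul_smul, ← smul_add] at hle
  calc S * f (S⁻¹ • (a • x + b • y))
      ≤ S * (S⁻¹ * a * f x + S⁻¹ * b * f y) := mul_le_mul_of_nonneg_left hle hS.le
    _ = a * f x + b * f y := by field_simp

end Combination

theorem mul_sq_norm_inv_smul_add_sub {E : Type*} [NormedAddCommGroup E] [NormedSpace ℝ E]
    {A α L B : ℝ} (hS : 0 < A + α) (hquad : (A + α) * B = L * α ^ 2) (u u' x : E) :
    (A + α) * (L / 2 * ‖(A + α)⁻¹ • (α • u' + A • x) - (A + α)⁻¹ • (α • u + A • x)‖ ^ 2)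
      = B * (1 / 2 * ‖u' - u‖ ^ 2) := by
  have hstep : (A + α)⁻¹ • (α • u' + A • x) - (A + α)⁻¹ • (α • u + A • x)
      = ((A + α)⁻¹ * α) • (u' - u) := by module
  rw [hstep, norm_smul, mul_pow, Real.norm_eq_abs, sq_abs]
  field_simp
  linear_combination -‖u' - u‖ ^ 2 * hquad

theorem stmt6_general
    {E : Type*} [NormedAddCommGroup E] [InnerProductSpace ℝ E] [FiniteDimensional ℝ E]
    (Q : Set E) (hQ : Convex ℝ Q)
    (d : E → ℝ) (Dd : E → E)
    (hd_diff : ∀ x, HasGradientAt d (Dd x) x)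
    (f : E → ℝ) (μ m δk δtk : ℝ)
    (hμ : 0 ≤ μ) (hm : 0 ≤ m)
    (A α Lc : ℝ) (hA : 0 ≤ A) (hα : 0 < α)
    (hquad : (A + α) * (1 + A * μ + A * m) = Lc * α ^ 2)
    (xk uk : E) (hxk : xk ∈ Q) (huk : uk ∈ Q)
    (ynext : E) (hynext : ynext = (A + α)⁻¹ • (α • uk + A • xk))
    (ψ : E → ℝ) (hψ_conv : ConvexOn ℝ Q ψ)
    (hψ_strong : StrongRelConvexOn Q (breg d Dd) m ψ)
    (c : ℝ)
    (ha : ∀ x ∈ Q, μ * breg d Dd ynext x ≤ f x - c - ψ x)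
    (unext : E)
    (hb : IsApproxMinOn Q
      (fun x => α * ψ x + (1 + A * μ + A * m) * breg d Dd uk x + α * μ * breg d Dd ynext x)
      δtk unext)
    (xnext : E) (hxnext : xnext = (A + α)⁻¹ • (α • unext + A • xk))
    (hcd : ∃ cp : ℝ, f xnext ≤ cp + δk ∧
      cp ≤ c + ψ xnext + Lc / 2 * ‖xnext - ynext‖ ^ 2 + δk)
    (hsc : ∀ x ∈ Q, ∀ y ∈ Q, 1 / 2 * ‖x - y‖ ^ 2 ≤ breg d Dd y x) :
    ∀ x ∈ Q,
      (A + α) * f xnext - A * f xk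
          + (1 + (A + α) * μ + (A + α) * m) * breg d Dd unext x
          - (1 + A * μ + A * m) * breg d Dd uk x
        ≤ α * f x + 2 * δk * (A + α) + δtk := by
  intro x hx
  obtain ⟨cp, hf_cp, hcp⟩ := hcd
  have hS : 0 < A + α := by linarith
  have hunext : unext ∈ Q := hb.1
  have hy : ynext ∈ Q := hynext ▸ hQ.inv_smul_add_mem huk hxk hα.le hA hS (add_comm α A)
  have hprox := hb.three_point hQ hd_diff hψ_conv hψ_strong hα x hx
  have hψ_xnext : (A + α) * ψ xnext ≤ α * ψ unext + A * ψ xk :=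
    hxnext ▸ hψ_conv.mul_map_inv_smul_add_le hunext hxk hα.le hA hS (add_comm α A)
  have hquad_step : (A + α) * (Lc / 2 * ‖xnext - ynext‖ ^ 2)
      ≤ (1 + A * μ + A * m) * breg d Dd uk unext := by
    rw [hxnext, hynext, mul_sq_norm_inv_smul_add_sub hS hquad]
    exact mul_le_mul_of_nonneg_left (hsc unext hunext uk huk) (by positivity)
  have hV_unext : 0 ≤ breg d Dd ynext unext := le_trans (by positivity) (hsc unext hunext ynext hy)
  have hV_xk : 0 ≤ breg d Dd ynext xk := le_trans (by positivity) (hsc xk hxk ynext hy)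
  have hmodel_x := ha x hx
  have hmodel_xk := ha xk hxk
  linear_combination (A + α) * hf_cp + (A + α) * hcp + hψ_xnext + hquad_step + hprox
    + α * hmodel_x + A * hmodel_xk + (α * μ) * hV_unext + (A * μ) * hV_xk

/-- Lemma 3.7: the key per-iteration inequality of the fast adaptive gradient
method with an inexact `(δ, L, μ, m, V, ‖·‖)`-model. -/
theorem stmt6
    {E : Type*} [NormedAddCommGroup E] [InnerProductSpace ℝ E] [FiniteDimensional ℝ E]
    (Q : Set E) (hQ : Convex ℝ Q)
    (d : E → ℝ) (Dd : E → E)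
    (hd_conv : ConvexOn ℝ Set.univ d) (hd_diff : ∀ x, HasGradientAt d (Dd x) x)
    (f : E → ℝ) (μ m δk δtk : ℝ)
    (hμ : 0 ≤ μ) (hm : 0 ≤ m) (hδk : 0 ≤ δk) (hδtk : 0 ≤ δtk)
    (A α Lc : ℝ) (hA : 0 ≤ A) (hα : 0 < α) (hLc : 0 < Lc)
    (hquad : (A + α) * (1 + A * μ + A * m) = Lc * α ^ 2)
    (xk uk : E) (hxk : xk ∈ Q) (huk : uk ∈ Q)
    (ynext : E) (hynext : ynext = (A + α)⁻¹ • (α • uk + A • xk))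
    (ψ : E → ℝ) (hψ_conv : ConvexOn ℝ Q ψ) (hψ0 : ψ ynext = 0)
    (hψ_strong : StrongRelConvexOn Q (breg d Dd) m ψ)
    (c : ℝ)
    (ha : ∀ x ∈ Q, μ * breg d Dd ynext x ≤ f x - c - ψ x)
    (unext : E)
    (hb : IsApproxMinOn Q
      (fun x => α * ψ x + (1 + A * μ + A * m) * breg d Dd uk x + α * μ * breg d Dd ynext x)
      δtk unext)
    (xnext : E) (hxnext : xnext = (A + α)⁻¹ • (α • unext + A • xk))
    (hcd : ∃ cp : ℝ, f xnext ≤ cp + δk ∧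
      cp ≤ c + ψ xnext + Lc / 2 * ‖xnext - ynext‖ ^ 2 + δk)
    (hsc : ∀ x ∈ Q, ∀ y ∈ Q, 1 / 2 * ‖x - y‖ ^ 2 ≤ breg d Dd y x) :
    ∀ x ∈ Q,
      (A + α) * f xnext - A * f xk
          + (1 + (A + α) * μ + (A + α) * m) * breg d Dd unext x
          - (1 + A * μ + A * m) * breg d Dd uk x
        ≤ α * f x + 2 * δk * (A + α) + δtk :=
  stmt6_general Q hQ d Dd hd_diff f μ m δk δtk hμ hm A α Lc hA hα hquad xk uk hxk huk ynext hynext ψ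
    hψ_conv hψ_strong c ha unext hb xnext hxnext hcd hsc
end
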